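/- Let z ∈ ℝ^J with z ≥ 0 componentwise, let α ∈ ℝ^J with α ≥ 0 componentwise, let μ ∈ ℝ^J with μ_j > 0 for all j, set λ = (I − Pᵀ)⁻¹ α and ρ_j = λ_j / μ_j, and assume ρ_j < 1 for every j. Let w = (I − P)⁻¹ e, where e is the all-ones vector, define the linear input x(t) = z + (α − (I − Pᵀ)μ)·t, and let (y, q) be a solution of the Skorohod problem with input x and reflection matrix I − Pᵀ. Then q(t) = 0 for every t ≥ (wᵀ z) / (min_{1 ≤ j ≤ J} μ_j (1 − ρ_j)). -/

import Mathlib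

/-!
Write `c = μ - λ`. Since `α = (I - Pᵀ) λ`, the input is `x(t) = z - t (I - Pᵀ) c`, so
`q(t) = z + (I - Pᵀ) (y(t) - t c)`. If `q_j(r) = 0`, the increment `D` of `y - t c` over any
`[a, r]` satisfies `D_j ≤ (Pᵀ D)_j`. By complementarity, every increase of `y_j` is realised, up to
an arbitrarily small error, at a time where `q_j` vanishes; hence any componentwise bound `v` on the
increments of `y - t c` over `[0, T]` improves to `Pᵀ v`. As `(Pᵀ)ᵏ → 0`, the function `y - t c`
is nonincreasing: each `y_j` grows at rate at most `μ_j - λ_j`.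

With `(I - P) w = e`, the workload is `wᵀ q(t) = wᵀ z + ∑_j (y_j(t) - c_j t)`, a nonincreasing
function. While `q_j > 0`, `y_j` is flat, so the `j`-th term decreases at rate
`c_j ≥ ε = min_i c_i`; hence the workload decreases at rate at least `ε` as long as it is positive,
and vanishes by time `wᵀ z / ε`.
-/

open MeasureTheory Filter Topology

noncomputable section

/-- The matrix `P` is substochastic (nonnegative entries, row sums at most 1)
and has spectral radius strictly less than one. -/
def IsSubstochasticSpecLtOne {J : ℕ} (P : Matrix (Fin J) (Fin J) ℝ) : Prop :=
  (∀ i j, 0 ≤ P i j) ∧ (∀ i, ∑ j, P i j ≤ 1) ∧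
    (∀ μ ∈ spectrum ℂ (P.map (algebraMap ℝ ℂ)), ‖μ‖ < 1)

/-- `(y, q)` is a solution of the Skorohod problem on `[0, ∞)` with input `x` and
reflection matrix `I - Pᵀ`. -/
def IsSkorohodSolution {J : ℕ} (P : Matrix (Fin J) (Fin J) ℝ)
    (x y q : ℝ → Fin J → ℝ) : Prop :=
  (∀ t : ℝ, 0 ≤ t → q t = x t + (1 - P.transpose).mulVec (y t)) ∧
  (∀ t : ℝ, 0 ≤ t → ∀ j, 0 ≤ q t j) ∧
  y 0 = 0 ∧
  (∀ j, MonotoneOn (fun s => y s j) (Set.Ici (0 : ℝ))) ∧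
  (∀ j, ∀ t : ℝ, 0 ≤ t → ContinuousWithinAt (fun s => y s j) (Set.Ici t) t) ∧
  (∀ j, ∃ F : StieltjesFunction ℝ,
    (∀ s : ℝ, F s = y (max s 0) j) ∧
    ∀ t : ℝ, 0 ≤ t → ∫ s in Set.Icc (0 : ℝ) t, q s j ∂F.measure = 0)

open Set Matrix

namespace Matrix

variable {n : Type*} [Fintype n] [DecidableEq n]

section Gelfand

attribute [local instance] Matrix.linftyOpNormedRing Matrix.linftyOpNormedAlgebra

theorem tendsto_pow_of_forall_mem_spectrum_norm_lt_one [Nonempty n] {A : Matrix n n ℂ}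
    (hA : ∀ μ ∈ spectrum ℂ A, ‖μ‖ < 1) : Tendsto (fun k : ℕ => A ^ k) atTop (𝓝 0) := by
  have hρ : spectralRadius ℂ A < 1 := by
    simpa using spectrum.spectralRadius_lt_of_forall_lt A (r := 1) fun μ hμ => by
      exact_mod_cast hA μ hμ
  obtain ⟨r, hρr, hr1⟩ := ENNReal.lt_iff_exists_nnreal_btwn.mp hρ
  have hr : ∀ᶠ k : ℕ in atTop, ‖A ^ k‖₊ ≤ r ^ k := by
    filter_upwards [(spectrum.pow_nnnorm_pow_one_div_tendsto_nhds_spectralRadius A).eventually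
      (gt_mem_nhds hρr), eventually_gt_atTop 0] with k hk hk0
    rw [one_div, ENNReal.rpow_inv_lt_iff (by positivity)] at hk
    exact_mod_cast hk.le
  refine squeeze_zero_norm' (hr.mono fun k hk => (?_ : ‖A ^ k‖ ≤ (r : ℝ) ^ k)) ?_
  · exact_mod_cast hk
  · exact tendsto_pow_atTop_nhds_zero_of_lt_one r.coe_nonneg (by exact_mod_cast hr1)

end Gelfand

theorem tendsto_pow_of_forall_mem_spectrum_map_norm_lt_one [Nonempty n]
    {P : Matrix n n ℝ} (hP : ∀ μ ∈ spectrum ℂ (P.map (algebraMap ℝ ℂ)), ‖μ‖ < 1) :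
    Tendsto (fun k : ℕ => P ^ k) atTop (𝓝 0) := by
  have h := ((continuous_id.matrix_map Complex.continuous_re).tendsto 0).comp
    (tendsto_pow_of_forall_mem_spectrum_norm_lt_one hP)
  convert h using 2 with k
  · rw [Function.comp_apply, id, ← Matrix.map_pow, Matrix.map_map]
    ext
    simp
  · simp

theorem tendsto_transpose_pow_of_tendsto_pow {R : Type*} [CommSemiring R] [TopologicalSpace R]
    {M : Matrix n n R} (h : Tendsto (fun k : ℕ => M ^ k) atTop (𝓝 0)) :
    Tendsto (fun k : ℕ => Mᵀ ^ k) atTop (𝓝 0) := by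
  simpa [Function.comp_def, transpose_pow] using (continuous_id.matrix_transpose.tendsto 0).comp h

theorem tendsto_pow_mulVec_of_tendsto_pow {R : Type*} [Semiring R] [TopologicalSpace R]
    [IsTopologicalSemiring R] {M : Matrix n n R} (h : Tendsto (fun k : ℕ => M ^ k) atTop (𝓝 0))
    (v : n → R) : Tendsto (fun k : ℕ => M ^ k *ᵥ v) atTop (𝓝 0) := by
  simpa [Function.comp_def] using
    ((continuous_id.matrix_mulVec continuous_const).tendsto 0).comp h

section Field

variable {K : Type*} [Field K] [TopologicalSpace K] [IsTopologicalRing K] [T2Space K]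
  {M : Matrix n n K}

theorem isUnit_one_sub_of_tendsto_pow (hM : Tendsto (fun k : ℕ => M ^ k) atTop (𝓝 0)) :
    IsUnit (1 - M) := by
  rw [isUnit_iff_isUnit_det, isUnit_iff_ne_zero, Ne, ← exists_mulVec_eq_zero_iff]
  rintro ⟨v, hv0, hv⟩
  have hfix : M *ᵥ v = v := by
    rw [sub_mulVec, one_mulVec, sub_eq_zero] at hv
    exact hv.symm
  have hpow : ∀ k : ℕ, M ^ k *ᵥ v = v := by
    intro k
    induction k with
    | zero => simp
    | succ k ih => rw [pow_succ, ← mulVec_mulVec, hfix, ih]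
  exact hv0 (tendsto_nhds_unique (tendsto_const_nhds.congr fun k => (hpow k).symm)
    (tendsto_pow_mulVec_of_tendsto_pow hM v))

theorem one_sub_mulVec_inv_mulVec (hM : Tendsto (fun k : ℕ => M ^ k) atTop (𝓝 0)) (v : n → K) :
    (1 - M) *ᵥ ((1 - M)⁻¹ *ᵥ v) = v := by
  rw [mulVec_mulVec, mul_nonsing_inv _ ((isUnit_one_sub_of_tendsto_pow hM).map detMonoidHom),
    one_mulVec]

end Field

section Nonneg

variable {M : Matrix n n ℝ}

omit [DecidableEq n] in
theorem mulVec_mono (hM : ∀ i j, 0 ≤ M i j) {u v : n → ℝ} (h : u ≤ v) : M *ᵥ u ≤ M *ᵥ v :=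
  fun i => Finset.sum_le_sum fun j _ => mul_le_mul_of_nonneg_left (h j) (hM i j)

theorem nonpos_of_forall_le_pow_mulVec (hM : Tendsto (fun k : ℕ => M ^ k) atTop (𝓝 0))
    {u v : n → ℝ} (h : ∀ k : ℕ, u ≤ M ^ k *ᵥ v) : u ≤ 0 :=
  ge_of_tendsto' (tendsto_pow_mulVec_of_tendsto_pow hM v) h

theorem nonpos_of_le_mulVec (hM : ∀ i j, 0 ≤ M i j)
    (hpow : Tendsto (fun k : ℕ => M ^ k) atTop (𝓝 0)) {v : n → ℝ} (hv : v ≤ M *ᵥ v) : v ≤ 0 := by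
  have hp : v ⊔ 0 ≤ M *ᵥ (v ⊔ 0) :=
    sup_le (hv.trans (mulVec_mono hM le_sup_left))
      (by simpa using mulVec_mono hM (le_sup_right : (0 : n → ℝ) ≤ v ⊔ 0))
  have hiter : ∀ k : ℕ, v ⊔ 0 ≤ M ^ k *ᵥ (v ⊔ 0) := by
    intro k
    induction k with
    | zero => simp
    | succ k ih =>
      rw [pow_succ', ← mulVec_mulVec]
      exact hp.trans (mulVec_mono hM ih)
  exact le_sup_left.trans (nonpos_of_forall_le_pow_mulVec hpow hiter)

theorem le_of_one_sub_mulVec_eq (hM : ∀ i j, 0 ≤ M i j)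
    (hpow : Tendsto (fun k : ℕ => M ^ k) atTop (𝓝 0)) {b v : n → ℝ} (hb : 0 ≤ b)
    (hv : (1 - M) *ᵥ v = b) : b ≤ v := by
  rw [sub_mulVec, one_mulVec, sub_eq_iff_eq_add] at hv
  have hv0 : 0 ≤ v := by
    refine neg_nonpos.mp (nonpos_of_le_mulVec hM hpow ?_)
    calc -v = -b + M *ᵥ -v := by rw [mulVec_neg, ← neg_add, ← hv]
      _ ≤ M *ᵥ -v := add_le_of_nonpos_left (neg_nonpos.mpr hb)
  rw [hv]
  exact le_add_of_nonneg_right (by simpa using mulVec_mono hM hv0)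

end Nonneg

end Matrix

theorem StieltjesFunction.exists_mem_Ioc_lt_of_ae {F : StieltjesFunction ℝ} {p : ℝ → Prop}
    {a b δ : ℝ} (hp : ∀ᵐ s ∂F.measure, s ∈ Ioc a b → p s) (hab : F a < F b) (hδ : 0 < δ) :
    ∃ r ∈ Ioc a b, p r ∧ F b - δ < F r := by
  by_contra! h
  set E := {r ∈ Ioc a b | F b - δ < F r}
  have hE : F.measure E = 0 := by
    rw [measure_eq_zero_iff_ae_notMem]
    filter_upwards [hp] with r hr hrE
    exact (h r hrE.1 (hr hrE.1)).not_gt hrE.2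
  have hbE : b ∈ E := ⟨⟨F.mono.reflect_lt hab, le_rfl⟩, by linarith⟩
  have hbdd : BddBelow E := ⟨a, fun r hr => hr.1.1.le⟩
  set c := sInf E with hc
  have hcb : c ≤ b := csInf_le hbdd hbE
  have hFc : F b ≤ F c := by
    have hIoc : Ioc c b ⊆ E := fun r hr => by
      obtain ⟨e, he, her⟩ := exists_lt_of_csInf_lt ⟨b, hbE⟩ hr.1
      exact ⟨⟨he.1.1.trans her, hr.2⟩, he.2.trans_le (F.mono her.le)⟩
    have := measure_mono_null hIoc hE
    rwa [F.measure_Ioc, ENNReal.ofReal_eq_zero, sub_nonpos] at this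
  have hac : a < c := by
    refine (le_csInf ⟨b, hbE⟩ fun r hr => hr.1.1.le).lt_of_ne fun hac => ?_
    rw [← hc] at hac
    exact hab.not_ge (hac ▸ hFc)
  -- `E` is null and contains `[c, b]`, so `F` cannot jump at `c`; yet `F ≤ F b - δ` left of `c`.
  have hleft : F b ≤ Function.leftLim F c := by
    have hIcc : Icc c b ⊆ E := fun r hr =>
      ⟨⟨hac.trans_le hr.1, hr.2⟩, by linarith [hFc.trans (F.mono hr.1)]⟩
    have := measure_mono_null hIcc hE
    rwa [F.measure_Icc, ENNReal.ofReal_eq_zero, sub_nonpos] at this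
  have hbelow : Function.leftLim F c ≤ F b - δ := by
    refine le_of_tendsto (F.mono.tendsto_leftLim c) ?_
    filter_upwards [Ioo_mem_nhdsLT hac] with r hr
    by_contra! hr'
    exact notMem_of_lt_csInf hr.2 hbdd ⟨⟨hr.1, hr.2.le.trans hcb⟩, hr'⟩
  linarith

theorem image_le_sub_mul_of_eventually_le {f : ℝ → ℝ} {a b ε : ℝ} (hab : a ≤ b)
    (hf : ContinuousOn f (Icc a b))
    (h : ∀ x ∈ Ico a b, ∀ᶠ z in 𝓝[>] x, f z ≤ f x - ε * (z - x)) :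
    f b ≤ f a - ε * (b - a) := by
  refine image_le_of_liminf_slope_right_le_deriv_boundary hf (B := fun x => f a - ε * (x - a))
    (B' := fun _ => -ε) (by simp) (by fun_prop) (fun x _ => ?_) (fun x hx r hr => ?_)
    ⟨hab, le_rfl⟩
  · simpa using (((hasDerivAt_id x).sub_const a).const_mul ε).const_sub (f a) |>.hasDerivWithinAt
  · refine ((h x hx).and self_mem_nhdsWithin).frequently.mono fun z ⟨hz, hxz⟩ => ?_
    rw [slope_def_field, div_lt_iff₀ (sub_pos.2 hxz)]
    linarith [mul_lt_mul_of_pos_right hr (sub_pos.2 hxz)]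

namespace IsSkorohodSolution

variable {J : ℕ} {P : Matrix (Fin J) (Fin J) ℝ} {x y q : ℝ → Fin J → ℝ}

theorem q_eq (hsol : IsSkorohodSolution P x y q) {t : ℝ} (ht : 0 ≤ t) :
    q t = x t + (1 - Pᵀ) *ᵥ y t :=
  hsol.1 t ht

theorem q_nonneg (hsol : IsSkorohodSolution P x y q) {t : ℝ} (ht : 0 ≤ t) (j : Fin J) :
    0 ≤ q t j :=
  hsol.2.1 t ht j

theorem y_zero (hsol : IsSkorohodSolution P x y q) : y 0 = 0 :=
  hsol.2.2.1

theorem monotoneOn_y (hsol : IsSkorohodSolution P x y q) (j : Fin J) :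
    MonotoneOn (fun s => y s j) (Ici 0) :=
  hsol.2.2.2.1 j

theorem exists_stieltjesFunction_ae_q_eq_zero (hsol : IsSkorohodSolution P x y q)
    (hx : Continuous x) (j : Fin J) :
    ∃ F : StieltjesFunction ℝ, (∀ s, 0 ≤ s → F s = y s j) ∧
      ∀ᵐ s ∂F.measure, 0 ≤ s → q s j = 0 := by
  obtain ⟨hq, hq_nonneg, -, -, -, hF⟩ := hsol
  choose F hFy hFq using hF
  have hFy' : ∀ k s, 0 ≤ s → F k s = y s k := fun k s hs => by rw [hFy, max_eq_left hs]
  refine ⟨F j, hFy' j, ?_⟩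
  have hloc : LocallyIntegrable (fun s => x s j + ∑ k, (1 - Pᵀ) j k * F k s) (F j).measure :=
    ((continuous_apply j).comp hx).locallyIntegrable.add
      (locallyIntegrable_finsetSum _ fun k _ => (F k).mono.locallyIntegrable.smul ((1 - Pᵀ) j k))
  have hzero : ∀ n : ℕ, ∀ᵐ s ∂(F j).measure, s ∈ Icc 0 (n : ℝ) → q s j = 0 := by
    intro n
    have hint : IntegrableOn (fun s => q s j) (Icc 0 n) (F j).measure := by
      refine (hloc.integrableOn_isCompact isCompact_Icc).congr_fun (fun s hs => ?_)
        measurableSet_Icc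
      simp only [hq s hs.1, Pi.add_apply, mulVec, dotProduct, hFy' _ s hs.1]
    have hnonneg : 0 ≤ᵐ[(F j).measure.restrict (Icc 0 n)] fun s => q s j :=
      (ae_restrict_iff' measurableSet_Icc).mpr (ae_of_all _ fun s hs => hq_nonneg s hs.1 j)
    have := (setIntegral_eq_zero_iff_of_nonneg_ae hnonneg hint).mp (hFq j n n.cast_nonneg)
    exact (ae_restrict_iff' measurableSet_Icc).mp this
  filter_upwards [ae_all_iff.mpr hzero] with s hs hs0
  obtain ⟨n, hn⟩ := exists_nat_ge s
  exact hs n ⟨hs0, hn⟩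

theorem y_eq_of_forall_q_pos (hsol : IsSkorohodSolution P x y q) (hx : Continuous x)
    {j : Fin J} {a b : ℝ} (ha : 0 ≤ a) (hab : a ≤ b) (hpos : ∀ s ∈ Ioc a b, 0 < q s j) :
    y b j = y a j := by
  obtain ⟨F, hFy, hF⟩ := hsol.exists_stieltjesFunction_ae_q_eq_zero hx j
  have hnull : F.measure (Ioc a b) = 0 := by
    rw [measure_eq_zero_iff_ae_notMem]
    filter_upwards [hF] with s hs hsI
    exact (hpos s hsI).ne' (hs (ha.trans hsI.1.le))
  rw [F.measure_Ioc, ENNReal.ofReal_eq_zero, sub_nonpos, hFy b (ha.trans hab), hFy a ha] at hnull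
  exact hnull.antisymm (hsol.monotoneOn_y j ha (ha.trans hab) hab)

theorem exists_q_eq_zero_of_y_lt (hsol : IsSkorohodSolution P x y q) (hx : Continuous x)
    {j : Fin J} {a b δ : ℝ} (ha : 0 ≤ a) (hab : a ≤ b) (hy : y a j < y b j) (hδ : 0 < δ) :
    ∃ r ∈ Ioc a b, q r j = 0 ∧ y b j - δ < y r j := by
  obtain ⟨F, hFy, hF⟩ := hsol.exists_stieltjesFunction_ae_q_eq_zero hx j
  have hFab : F a < F b := by rwa [hFy a ha, hFy b (ha.trans hab)]
  obtain ⟨r, hr, hqr, hFr⟩ := F.exists_mem_Ioc_lt_of_ae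
    (p := fun r => q r j = 0) (hF.mono fun s hs hsI => hs (ha.trans hsI.1.le)) hFab hδ
  refine ⟨r, hr, hqr, ?_⟩
  rwa [hFy b (ha.trans hab), hFy r (ha.trans hr.1.le)] at hFr

section LinearInput

variable {z c : Fin J → ℝ}

theorem continuous_of_eq_sub_smul (hx : ∀ t, x t = z - t • ((1 - Pᵀ) *ᵥ c)) : Continuous x := by
  rw [funext hx]
  fun_prop

theorem q_sub_q_eq_mulVec (hsol : IsSkorohodSolution P x y q)
    (hx : ∀ t, x t = z - t • ((1 - Pᵀ) *ᵥ c)) {s t : ℝ} (hs : 0 ≤ s) (ht : 0 ≤ t) :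
    q t - q s = (1 - Pᵀ) *ᵥ ((y t - t • c) - (y s - s • c)) := by
  rw [hsol.q_eq ht, hsol.q_eq hs, hx, hx]
  simp only [mulVec_sub, mulVec_smul]
  abel

theorem le_mulVec_of_q_eq_zero (hsol : IsSkorohodSolution P x y q)
    (hx : ∀ t, x t = z - t • ((1 - Pᵀ) *ᵥ c)) {a r : ℝ} {j : Fin J} (ha : 0 ≤ a) (hr : 0 ≤ r)
    (hq : q r j = 0) :
    ((y r - r • c) - (y a - a • c)) j ≤ (Pᵀ *ᵥ ((y r - r • c) - (y a - a • c))) j := by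
  have h := congrFun (hsol.q_sub_q_eq_mulVec hx ha hr) j
  rw [sub_mulVec, one_mulVec, Pi.sub_apply, Pi.sub_apply, hq] at h
  linarith [hsol.q_nonneg ha j]

theorem sub_le_pow_mulVec (hsol : IsSkorohodSolution P x y q)
    (hx : ∀ t, x t = z - t • ((1 - Pᵀ) *ᵥ c)) (hc : 0 ≤ c) (hP : ∀ i j, 0 ≤ P i j) {T : ℝ}
    (k : ℕ) {a b : ℝ} (ha : 0 ≤ a) (hab : a ≤ b) (hbT : b ≤ T) :
    (y b - b • c) - (y a - a • c) ≤ Pᵀ ^ k *ᵥ (y T - y 0) := by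
  have hmono := hsol.monotoneOn_y
  induction k generalizing a b with
  | zero =>
    intro j
    have h1 := hmono j ha (ha.trans hab) hab
    have h2 := hmono j (ha.trans hab) (ha.trans (hab.trans hbT)) hbT
    have h3 := hmono j self_mem_Ici ha ha
    simp only [pow_zero, one_mulVec, Pi.sub_apply, Pi.smul_apply, smul_eq_mul] at h1 h2 h3 ⊢
    linarith [mul_nonneg (sub_nonneg.2 hab) (hc j)]
  | succ k ih =>
    have hPT : ∀ i j, 0 ≤ Pᵀ i j := fun i j => hP j i
    have hv : 0 ≤ Pᵀ ^ k *ᵥ (y T - y 0) := by simpa using ih ha le_rfl (hab.trans hbT)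
    rw [pow_succ', ← mulVec_mulVec]
    intro j
    rcases (hmono j ha (ha.trans hab) hab).eq_or_lt with hy | hy
    · have : 0 ≤ (Pᵀ *ᵥ (Pᵀ ^ k *ᵥ (y T - y 0))) j := by
        simpa using mulVec_mono hPT hv j
      simp only [Pi.sub_apply, Pi.smul_apply, smul_eq_mul] at hy ⊢
      linarith [mul_nonneg (sub_nonneg.2 hab) (hc j)]
    refine le_of_forall_pos_le_add fun δ hδ => ?_
    obtain ⟨r, hr, hqr, hyr⟩ :=
      hsol.exists_q_eq_zero_of_y_lt (continuous_of_eq_sub_smul hx) ha hab hy hδ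
    have h1 := hsol.le_mulVec_of_q_eq_zero hx ha (ha.trans hr.1.le) hqr
    have h2 := mulVec_mono hPT (ih ha hr.1.le (hr.2.trans hbT)) j
    simp only [Pi.sub_apply, Pi.smul_apply, smul_eq_mul] at h1 h2 hyr ⊢
    linarith [mul_nonneg (sub_nonneg.2 hr.2) (hc j)]

theorem antitoneOn_sub_smul (hsol : IsSkorohodSolution P x y q)
    (hx : ∀ t, x t = z - t • ((1 - Pᵀ) *ᵥ c)) (hc : 0 ≤ c) (hP : ∀ i j, 0 ≤ P i j)
    (hpow : Tendsto (fun k : ℕ => Pᵀ ^ k) atTop (𝓝 0)) :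
    AntitoneOn (fun t => y t - t • c) (Ici 0) := fun _ ha _ _ hab =>
  sub_nonpos.mp <| nonpos_of_forall_le_pow_mulVec hpow fun k =>
    hsol.sub_le_pow_mulVec hx hc hP k ha hab le_rfl

theorem continuousOn_q (hsol : IsSkorohodSolution P x y q)
    (hx : ∀ t, x t = z - t • ((1 - Pᵀ) *ᵥ c)) (hc : 0 ≤ c) (hP : ∀ i j, 0 ≤ P i j)
    (hpow : Tendsto (fun k : ℕ => Pᵀ ^ k) atTop (𝓝 0)) : ContinuousOn q (Ici 0) := by
  have hanti := hsol.antitoneOn_sub_smul hx hc hP hpow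
  have hy : ContinuousOn y (Ici 0) := by
    refine continuousOn_pi.mpr fun j =>
      (LipschitzOnWith.of_le_add_mul' (c j) fun a ha b hb => ?_).continuousOn
    rcases le_total a b with hab | hab
    · have hy : y a j ≤ y b j := hsol.monotoneOn_y j ha hb hab
      linarith [mul_nonneg (hc j) (dist_nonneg : 0 ≤ dist a b)]
    · have := hanti hb ha hab j
      simp only [Pi.sub_apply, Pi.smul_apply, smul_eq_mul] at this
      rw [Real.dist_eq, abs_of_nonneg (sub_nonneg.2 hab)]
      linarith
  refine ContinuousOn.congr ?_ fun t ht => hsol.q_eq ht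
  exact (continuous_of_eq_sub_smul hx).continuousOn.add
    ((continuous_const.matrix_mulVec continuous_id).comp_continuousOn hy)

variable {w : Fin J → ℝ}

theorem dotProduct_q_sub_eq_sum (hsol : IsSkorohodSolution P x y q)
    (hx : ∀ t, x t = z - t • ((1 - Pᵀ) *ᵥ c)) (hw : (1 - P) *ᵥ w = 1) {s t : ℝ} (hs : 0 ≤ s)
    (ht : 0 ≤ t) : w ⬝ᵥ q t - w ⬝ᵥ q s = ∑ j, ((y t - t • c) - (y s - s • c)) j := by
  have hT : (1 : Matrix (Fin J) (Fin J) ℝ) - Pᵀ = (1 - P)ᵀ := by rw [transpose_sub, transpose_one]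
  rw [← _root_.dotProduct_sub, hsol.q_sub_q_eq_mulVec hx hs ht, dotProduct_mulVec, hT,
    vecMul_transpose, hw, one_dotProduct]

theorem eventually_dotProduct_q_le (hsol : IsSkorohodSolution P x y q)
    (hx : ∀ t, x t = z - t • ((1 - Pᵀ) *ᵥ c)) (hc : 0 ≤ c) (hP : ∀ i j, 0 ≤ P i j)
    (hpow : Tendsto (fun k : ℕ => Pᵀ ^ k) atTop (𝓝 0)) (hw : (1 - P) *ᵥ w = 1) {ε : ℝ}
    (hεc : ∀ j, ε ≤ c j) {τ : ℝ} (hτ : 0 ≤ τ) (hq : q τ ≠ 0) :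
    ∀ᶠ t in 𝓝[>] τ, w ⬝ᵥ q t ≤ w ⬝ᵥ q τ - ε * (t - τ) := by
  obtain ⟨j, hj⟩ := Function.ne_iff.mp hq
  have hpos : 0 < q τ j := (hsol.q_nonneg hτ j).lt_of_ne' hj
  have hcont : ContinuousWithinAt (fun s => q s j) (Ici τ) τ :=
    (((continuous_apply j).comp_continuousOn (hsol.continuousOn_q hx hc hP hpow)).continuousWithinAt
      hτ).mono (Ici_subset_Ici.2 hτ)
  obtain ⟨u, hu, hqpos⟩ :=
    mem_nhdsGE_iff_exists_Ico_subset.mp (hcont.eventually (lt_mem_nhds hpos))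
  filter_upwards [Ioo_mem_nhdsGT hu] with t ht
  have hflat : y t j = y τ j := hsol.y_eq_of_forall_q_pos (continuous_of_eq_sub_smul hx) hτ
    ht.1.le fun s hs => hqpos ⟨hs.1.le, hs.2.trans_lt ht.2⟩
  have hD : ∀ k, ((y t - t • c) - (y τ - τ • c)) k ≤ 0 := fun k =>
    sub_nonpos.2 (hsol.antitoneOn_sub_smul hx hc hP hpow hτ (hτ.trans ht.1.le) ht.1.le k)
  have hsum := hsol.dotProduct_q_sub_eq_sum hx hw hτ (hτ.trans ht.1.le)
  rw [← Finset.add_sum_erase _ _ (Finset.mem_univ j)] at hsum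
  have hrest := Finset.sum_nonpos fun k (_ : k ∈ Finset.univ.erase j) => hD k
  simp only [Pi.sub_apply, Pi.smul_apply, smul_eq_mul] at hsum hrest
  rw [hflat] at hsum
  linarith [mul_le_mul_of_nonneg_right (hεc j) (sub_nonneg.2 ht.1.le)]

theorem q_eq_zero_of_div_le (hsol : IsSkorohodSolution P x y q)
    (hx : ∀ t, x t = z - t • ((1 - Pᵀ) *ᵥ c)) (hc : 0 ≤ c) (hP : ∀ i j, 0 ≤ P i j)
    (hpow : Tendsto (fun k : ℕ => Pᵀ ^ k) atTop (𝓝 0)) (hw : (1 - P) *ᵥ w = 1)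
    (hw_pos : ∀ j, 0 < w j) {ε : ℝ} (hε : 0 < ε) (hεc : ∀ j, ε ≤ c j) {t : ℝ}
    (ht : w ⬝ᵥ z / ε ≤ t) : q t = 0 := by
  have hq0 : q 0 = z := by simp [hsol.q_eq le_rfl, hsol.y_zero, hx]
  have hf_nonneg : ∀ s, 0 ≤ s → 0 ≤ w ⬝ᵥ q s := fun s hs =>
    dotProduct_nonneg_of_nonneg (fun j => (hw_pos j).le) (hsol.q_nonneg hs)
  have ht0 : 0 ≤ t := (div_nonneg (hq0 ▸ hf_nonneg 0 le_rfl) hε.le).trans ht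
  have hf_anti : ∀ s, 0 ≤ s → s ≤ t → w ⬝ᵥ q t ≤ w ⬝ᵥ q s := fun s hs hst => by
    have hanti := hsol.antitoneOn_sub_smul hx hc hP hpow hs ht0 hst
    have hsum : ∑ j, ((y t - t • c) - (y s - s • c)) j ≤ 0 :=
      Finset.sum_nonpos fun j _ => sub_nonpos.2 (hanti j)
    linarith [hsol.dotProduct_q_sub_eq_sum hx hw hs ht0]
  suffices hft : w ⬝ᵥ q t ≤ 0 by
    have hterm := (Finset.sum_eq_zero_iff_of_nonneg fun j _ =>
      mul_nonneg (hw_pos j).le (hsol.q_nonneg ht0 j)).mp (hft.antisymm (hf_nonneg t ht0))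
    funext j
    exact (mul_eq_zero.mp (hterm j (Finset.mem_univ j))).resolve_left (hw_pos j).ne'
  by_contra! hpos
  have hcont : ContinuousOn (fun s => w ⬝ᵥ q s) (Icc 0 t) :=
    ((continuous_const.dotProduct continuous_id).comp_continuousOn
      (hsol.continuousOn_q hx hc hP hpow)).mono Icc_subset_Ici_self
  have hdecay := image_le_sub_mul_of_eventually_le ht0 hcont fun s hs =>
    hsol.eventually_dotProduct_q_le hx hc hP hpow hw hεc hs.1 fun h0 => by
      linarith [hf_anti s hs.1 hs.2.le, dotProduct_zero w, congrArg (w ⬝ᵥ ·) h0]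
  rw [hq0, sub_zero] at hdecay
  rw [div_le_iff₀ hε] at ht
  linarith

end LinearInput

end IsSkorohodSolution

theorem fluid_model_drains_general {J : ℕ} (hJ : 0 < J)
    (P : Matrix (Fin J) (Fin J) ℝ) (hP : IsSubstochasticSpecLtOne P)
    (z α μ : Fin J → ℝ)
    (hμ : ∀ j, 0 < μ j)
    (lam : Fin J → ℝ) (hlam : lam = ((1 - P.transpose)⁻¹).mulVec α)
    (hρ : ∀ j, lam j / μ j < 1)
    (w : Fin J → ℝ) (hw : w = ((1 - P)⁻¹).mulVec (fun _ => 1))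
    (x : ℝ → Fin J → ℝ)
    (hx : ∀ t : ℝ, x t = fun j => z j + (α j - ((1 - P.transpose).mulVec μ) j) * t)
    (y q : ℝ → Fin J → ℝ) (hsol : IsSkorohodSolution P x y q) :
    ∀ t : ℝ, (dotProduct w z) / (⨅ j, μ j * (1 - lam j / μ j)) ≤ t →
      q t = 0 := by
  have : Nonempty (Fin J) := Fin.pos_iff_nonempty.mp hJ
  obtain ⟨hP_nonneg, -, hP_spec⟩ := hP
  have hpow := tendsto_pow_of_forall_mem_spectrum_map_norm_lt_one hP_spec
  have hpowT := tendsto_transpose_pow_of_tendsto_pow hpow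
  have hw1 : (1 - P) *ᵥ w = 1 := by
    rw [hw]
    exact one_sub_mulVec_inv_mulVec hpow _
  have hx' : ∀ t, x t = z - t • ((1 - Pᵀ) *ᵥ (μ - lam)) := fun t => by
    rw [hx t, mulVec_sub, hlam, one_sub_mulVec_inv_mulVec hpowT]
    ext j
    simp only [Pi.sub_apply, Pi.smul_apply, smul_eq_mul]
    ring
  have hεc : ∀ j, ⨅ i, μ i * (1 - lam i / μ i) ≤ (μ - lam) j := fun j =>
    (ciInf_le (Set.finite_range _).bddBelow j).trans_eq <| by
      rw [mul_one_sub, mul_div_cancel₀ _ (hμ j).ne', Pi.sub_apply]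
  have hε : 0 < ⨅ j, μ j * (1 - lam j / μ j) := by
    obtain ⟨j, hj⟩ := exists_eq_ciInf_of_finite (f := fun j => μ j * (1 - lam j / μ j))
    exact hj ▸ mul_pos (hμ j) (sub_pos.2 (hρ j))
  have hw_pos : ∀ j, 0 < w j := fun j =>
    zero_lt_one.trans_le (le_of_one_sub_mulVec_eq hP_nonneg hpow zero_le_one hw1 j)
  exact fun t ht => hsol.q_eq_zero_of_div_le hx' (fun j => hε.le.trans (hεc j)) hP_nonneg hpowT
    hw1 hw_pos hε hεc ht

/-- Fluid stability of the generalized Jackson network: with linear input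
`x(t) = z + (α − (I − Pᵀ)μ) t` and traffic intensities `ρ_j = λ_j/μ_j < 1`,
the fluid queue length `q` drains to zero by time
`wᵀz / min_j μ_j (1 − ρ_j)`, where `w = (I − P)⁻¹ e`. -/
theorem fluid_model_drains {J : ℕ} (hJ : 0 < J)
    (P : Matrix (Fin J) (Fin J) ℝ) (hP : IsSubstochasticSpecLtOne P)
    (z α μ : Fin J → ℝ) (hz : ∀ j, 0 ≤ z j) (hα : ∀ j, 0 ≤ α j)
    (hμ : ∀ j, 0 < μ j)
    (lam : Fin J → ℝ) (hlam : lam = ((1 - P.transpose)⁻¹).mulVec α)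
    (hρ : ∀ j, lam j / μ j < 1)
    (w : Fin J → ℝ) (hw : w = ((1 - P)⁻¹).mulVec (fun _ => 1))
    (x : ℝ → Fin J → ℝ)
    (hx : ∀ t : ℝ, x t = fun j => z j + (α j - ((1 - P.transpose).mulVec μ) j) * t)
    (y q : ℝ → Fin J → ℝ) (hsol : IsSkorohodSolution P x y q) :
    ∀ t : ℝ, (dotProduct w z) / (⨅ j, μ j * (1 - lam j / μ j)) ≤ t →
      q t = 0 :=
  fluid_model_drains_general hJ P hP z α μ hμ lam hlam hρ w hw x hx y q hsol

end
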